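/- arXiv:2007.05176 — 4 statements merged into one kernel-verified Lean document; each statement's English description precedes it below -/
import Mathlib

section
/- The pdf of the GEMO-Exponential distribution, g(x) = α^β·β·γ·λ·e^{-βγλx}·(1 - (1-α)·e^{-γλx})^{-(β+1)} for x > 0, integrates to 1 over (0, ∞), for all α, β, γ, λ > 0. -/
/-! With `u = exp (-(c * x))` and `B = 1 - (1 - α) * u`, the density is `-S'` for the survival
function `S = α ^ β * u ^ β * B ^ (-β)`, which falls from `S 0 = 1` to `0` at infinity. -/

open MeasureTheory Filter Topology Real Set

namespace GEMOExponential

variable {α β c x : ℝ}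

noncomputable def base (α c x : ℝ) : ℝ := 1 - (1 - α) * exp (-(c * x))

noncomputable def pdf (α β c x : ℝ) : ℝ :=
  α ^ β * β * c * exp (-(β * c * x)) * base α c x ^ (-(β + 1))

noncomputable def survival (α β c x : ℝ) : ℝ :=
  α ^ β * exp (-(β * c * x)) * base α c x ^ (-β)

theorem base_pos (hα : 0 < α) (hc : 0 ≤ c) (hx : 0 ≤ x) : 0 < base α c x := by
  have hu : 0 < exp (-(c * x)) := exp_pos _
  have hu_le : exp (-(c * x)) ≤ 1 := exp_le_one_iff.mpr (neg_nonpos.mpr (mul_nonneg hc hx))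
  unfold base
  nlinarith [mul_pos hα hu]

theorem base_zero : base α c 0 = α := by simp [base]

theorem hasDerivAt_exp_neg_mul (k x : ℝ) :
    HasDerivAt (fun x => exp (-(k * x))) (-k * exp (-(k * x))) x := by
  simpa [mul_comm] using ((hasDerivAt_id x).const_mul (-k)).exp

theorem tendsto_exp_neg_mul_atTop {k : ℝ} (hk : 0 < k) :
    Tendsto (fun x => exp (-(k * x))) atTop (𝓝 0) :=
  tendsto_exp_neg_atTop_nhds_zero.comp (tendsto_id.const_mul_atTop hk)

theorem hasDerivAt_base (α c x : ℝ) :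
    HasDerivAt (base α c) ((1 - α) * c * exp (-(c * x))) x :=
  (((hasDerivAt_exp_neg_mul c x).const_mul (1 - α)).const_sub 1).congr_deriv (by ring)

theorem tendsto_base_atTop (hc : 0 < c) : Tendsto (base α c) atTop (𝓝 1) := by
  have h := ((tendsto_exp_neg_mul_atTop hc).const_mul (1 - α)).const_sub 1
  rwa [mul_zero, sub_zero] at h

theorem hasDerivAt_survival (hB : base α c x ≠ 0) :
    HasDerivAt (survival α β c) (-pdf α β c x) x := by
  have hB_pow : base α c x ^ (-β) = base α c x ^ (-(β + 1)) * base α c x := by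
    rw [← rpow_add_one hB]; ring_nf
  -- the two terms of the product rule combine through `B + (1 - α) * u = 1`
  have hsum : base α c x + (1 - α) * exp (-(c * x)) = 1 := by unfold base; ring
  refine (((hasDerivAt_exp_neg_mul (β * c) x).const_mul (α ^ β)).mul
    ((hasDerivAt_base α c x).rpow_const (p := -β) (Or.inl hB))).congr_deriv ?_
  rw [pdf, show -β - 1 = -(β + 1) by ring, hB_pow]
  linear_combination (-α ^ β * β * c * exp (-(β * c * x)) * base α c x ^ (-(β + 1))) * hsum

theorem survival_zero (hα : 0 < α) : survival α β c 0 = 1 := by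
  rw [survival, base_zero, mul_zero, neg_zero, exp_zero, mul_one, rpow_neg hα.le,
    mul_inv_cancel₀ (rpow_pos_of_pos hα β).ne']

theorem tendsto_survival_atTop (hβ : 0 < β) (hc : 0 < c) :
    Tendsto (survival α β c) atTop (𝓝 0) := by
  have hbase_pow : Tendsto (fun x => base α c x ^ (-β)) atTop (𝓝 1) := by
    simpa using (tendsto_base_atTop hc).rpow_const (p := -β) (Or.inl one_ne_zero)
  have h := ((tendsto_exp_neg_mul_atTop (mul_pos hβ hc)).const_mul (α ^ β)).mul hbase_pow
  rwa [mul_zero, zero_mul] at h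

theorem pdf_nonneg (hα : 0 < α) (hβ : 0 ≤ β) (hc : 0 ≤ c) (hx : 0 ≤ x) : 0 ≤ pdf α β c x := by
  have := base_pos hα hc hx
  unfold pdf
  positivity

theorem integral_pdf (hα : 0 < α) (hβ : 0 < β) (hc : 0 < c) :
    ∫ x in Ioi 0, pdf α β c x = 1 := by
  have hderiv : ∀ x ∈ Ici (0 : ℝ), HasDerivAt (-survival α β c) (pdf α β c x) x :=
    fun x hx => (hasDerivAt_survival (base_pos hα hc.le hx).ne').neg.congr_deriv (neg_neg _)
  rw [integral_Ioi_of_hasDerivAt_of_nonneg' hderiv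
    (fun x hx => pdf_nonneg hα hβ.le hc.le (le_of_lt hx))
    (neg_zero (G := ℝ) ▸ (tendsto_survival_atTop hβ hc).neg), Pi.neg_apply, survival_zero hα]
  ring

end GEMOExponential

theorem gemo_exponential_pdf_integrates_to_one (α β γ l : ℝ)
    (hα : 0 < α) (hβ : 0 < β) (hγ : 0 < γ) (hl : 0 < l) :
    ∫ x in Set.Ioi (0:ℝ),
      α ^ β * β * γ * l * Real.exp (-(β * γ * l * x)) *
        (1 - (1 - α) * Real.exp (-(γ * l * x))) ^ (-(β + 1)) = 1 := by
  have hrate : ∀ x, α ^ β * β * γ * l * Real.exp (-(β * γ * l * x)) *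
      (1 - (1 - α) * Real.exp (-(γ * l * x))) ^ (-(β + 1)) = GEMOExponential.pdf α β (γ * l) x :=
    fun x => by simp only [GEMOExponential.pdf, GEMOExponential.base, mul_assoc]
  simp_rw [hrate]
  exact GEMOExponential.integral_pdf hα hβ (mul_pos hγ hl)
end

section
/- If X follows the GEMO-Exponential distribution with parameters α, β, γ, λ > 0, then the ratio of survival functions satisfies S(x)/e^{-βγλx} → α^β as x → ∞; i.e., the GEMO-Exponential survival function is asymptotically α^β times the survival function of an exponential distribution with rate βγλ. -/
open Filter

open Topology in
/-- `α G / (1 - (1 - α) G)` is the GEMO transform of a baseline survival function `G`. Once `G > 0`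
the factor `G ^ β` cancels exactly, leaving `(α / (1 - (1 - α) G)) ^ β → α ^ β`. -/
theorem tendsto_gemo_div_rpow_of_tendsto_nhdsGT_zero {ι : Type*} {f : Filter ι} {G : ι → ℝ}
    {α : ℝ} (β : ℝ) (hα : 0 < α) (hG : Tendsto G f (𝓝[>] 0)) :
    Tendsto (fun i => (α * G i / (1 - (1 - α) * G i)) ^ β / G i ^ β) f (𝓝 (α ^ β)) := by
  have hG0 : Tendsto G f (𝓝 0) := tendsto_nhdsWithin_iff.mp hG |>.1
  have hD : Tendsto (fun i => 1 - (1 - α) * G i) f (𝓝 1) := by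
    simpa using (hG0.const_mul (1 - α)).const_sub 1
  have hratio : Tendsto (fun i => α / (1 - (1 - α) * G i)) f (𝓝 α) := by
    have h := (tendsto_const_nhds (x := α)).div hD one_ne_zero
    rwa [div_one] at h
  refine (hratio.rpow_const (Or.inl hα.ne')).congr' ?_
  filter_upwards [tendsto_nhdsWithin_iff.mp hG |>.2, hD.eventually (lt_mem_nhds one_pos)]
    with i (hGi : 0 < G i) hDi
  rw [mul_div_right_comm, Real.mul_rpow (by positivity) hGi.le,
    mul_div_cancel_right₀ _ (Real.rpow_pos_of_pos hGi β).ne']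

theorem gemo_exponential_tail_asymptotic_general (α β γ l : ℝ)
    (hα : 0 < α) (hγ : 0 < γ) (hl : 0 < l) :
    Tendsto (fun x : ℝ =>
        (α * Real.exp (-(γ * l * x)) / (1 - (1 - α) * Real.exp (-(γ * l * x)))) ^ β /
          Real.exp (-(β * γ * l * x)))
      atTop (nhds (α ^ β)) := by
  have hexp : Tendsto (fun x : ℝ => Real.exp (-(γ * l * x))) atTop
      (nhdsWithin 0 (Set.Ioi 0)) :=
    Real.tendsto_exp_atBot_nhdsGT.comp
      (tendsto_neg_atTop_atBot.comp (tendsto_id.const_mul_atTop (mul_pos hγ hl)))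
  have hpow : ∀ x : ℝ, Real.exp (-(β * γ * l * x)) = Real.exp (-(γ * l * x)) ^ β := fun x => by
    rw [← Real.exp_mul]; ring_nf
  simpa only [hpow] using tendsto_gemo_div_rpow_of_tendsto_nhdsGT_zero β hα hexp

theorem gemo_exponential_tail_asymptotic (α β γ l : ℝ)
    (hα : 0 < α) (hβ : 0 < β) (hγ : 0 < γ) (hl : 0 < l) :
    Tendsto (fun x : ℝ =>
        (α * Real.exp (-(γ * l * x)) / (1 - (1 - α) * Real.exp (-(γ * l * x)))) ^ β /
          Real.exp (-(β * γ * l * x)))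
      atTop (nhds (α ^ β)) :=
  gemo_exponential_tail_asymptotic_general α β γ l hα hγ hl
end

section
/- If β·γ ≥ 1 and 0 < α ≤ 1, then for all s ∈ [0,1] the GEMO survival transform satisfies (α·s^γ/(1-(1-α)·s^γ))^β ≤ s; i.e., the GEMO lifetime is stochastically smaller than the baseline lifetime. -/
/-!
For `0 ≤ α ≤ 1` the Marshall–Olkin map `t ↦ α t / (1 - (1 - α) t)` lies below the identity on
`[0, 1]`, so the GEMO transform is at most `(s ^ γ) ^ β = s ^ (γ β)`, which is at most `s` once
`γ β ≥ 1`.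
-/

open Real

lemma marshallOlkin_le_self {α t : ℝ} (hα : 0 ≤ α) (hα1 : α ≤ 1) (ht : 0 ≤ t) (ht1 : t ≤ 1) :
    α * t / (1 - (1 - α) * t) ≤ t := by
  have hden : 0 ≤ 1 - (1 - α) * t := by nlinarith
  refine div_le_of_le_mul₀ hden ht ?_
  -- `t (1 - (1 - α) t) - α t = (1 - α) t (1 - t)`
  nlinarith [mul_nonneg (mul_nonneg (sub_nonneg.2 hα1) ht) (sub_nonneg.2 ht1)]

lemma marshallOlkin_nonneg {α t : ℝ} (hα : 0 ≤ α) (ht : 0 ≤ t) (ht1 : t ≤ 1) :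
    0 ≤ α * t / (1 - (1 - α) * t) :=
  div_nonneg (mul_nonneg hα ht) (by nlinarith)

theorem gemo_stochastically_smaller (α β γ : ℝ)
    (hα : 0 < α) (hα1 : α ≤ 1) (hβ : 0 < β) (hγ : 0 < γ) (hβγ : 1 ≤ β * γ) :
    ∀ s ∈ Set.Icc (0:ℝ) 1, (α * s ^ γ / (1 - (1 - α) * s ^ γ)) ^ β ≤ s := by
  rintro s ⟨hs0, hs1⟩
  have ht0 : 0 ≤ s ^ γ := rpow_nonneg hs0 γ
  have ht1 : s ^ γ ≤ 1 := rpow_le_one hs0 hs1 hγ.le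
  calc (α * s ^ γ / (1 - (1 - α) * s ^ γ)) ^ β
      ≤ (s ^ γ) ^ β :=
        rpow_le_rpow (marshallOlkin_nonneg hα.le ht0 ht1)
          (marshallOlkin_le_self hα.le hα1 ht0 ht1) hβ.le
    _ = s ^ (γ * β) := (rpow_mul hs0 γ β).symm
    _ ≤ s := rpow_le_self_of_le_one hs0 hs1 (by linarith [mul_comm β γ])
end

section
/- The mean of the GEMO-Exponential distribution with γ = β = 1 and α ∈ (0,1] exists and equals ∫₀^∞ (α·e^{-λx}/(1-(1-α)·e^{-λx})) dx = -α·ln(α)/(λ·(1-α)) for α ≠ 1, and 1/λ for α = 1. -/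
/-!
For `α < 1` put `c = 1 - α ∈ (0, 1)`: the survival function is `α / (c l)` times the derivative
of `x ↦ log (1 - c e^{-l x})`, which increases from `log α` at `0` to `0` at infinity.
For `α = 1` it is the exponential survival function `e^{-l x}`. Integrability in both cases
comes from the bound `S(x) ≤ e^{-l x}`, as the denominator is at least `α`.
-/

open MeasureTheory Set Filter Real Topology

section
variable {c l x : ℝ}

lemma mul_exp_neg_mul_lt_one (hc : c < 1) (hl : 0 ≤ l) (hx : 0 ≤ x) :
    c * exp (-(l * x)) < 1 := by
  have he0 : 0 < exp (-(l * x)) := exp_pos _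
  have he1 : exp (-(l * x)) ≤ 1 := exp_le_one_iff.mpr (by nlinarith)
  nlinarith

lemma hasDerivAt_log_one_sub_mul_exp_neg (hx : c * exp (-(l * x)) < 1) :
    HasDerivAt (fun x => log (1 - c * exp (-(l * x))))
      (c * l * exp (-(l * x)) / (1 - c * exp (-(l * x)))) x := by
  have hlin : HasDerivAt (fun x => -(l * x)) (-l) x := by
    simpa [Pi.neg_def] using ((hasDerivAt_id x).const_mul l).neg
  convert ((hlin.exp.const_mul c).const_sub 1).log (by linarith) using 1
  ring

lemma tendsto_log_one_sub_mul_exp_neg (hl : 0 < l) :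
    Tendsto (fun x => log (1 - c * exp (-(l * x)))) atTop (𝓝 0) := by
  have hexp : Tendsto (fun x => exp (-(l * x))) atTop (𝓝 0) :=
    tendsto_exp_neg_atTop_nhds_zero.comp (tendsto_id.const_mul_atTop hl)
  have hinner : Tendsto (fun x => 1 - c * exp (-(l * x))) atTop (𝓝 1) := by
    simpa using (hexp.const_mul c).const_sub 1
  simpa [Function.comp_def] using (continuousAt_log one_ne_zero).tendsto.comp hinner

theorem integral_Ioi_mul_exp_neg_div_one_sub (hc0 : 0 ≤ c) (hc : c < 1) (hl : 0 < l) :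
    ∫ x in Ioi 0, c * l * exp (-(l * x)) / (1 - c * exp (-(l * x))) = -log (1 - c) := by
  have hderiv : ∀ x ∈ Ici (0 : ℝ), HasDerivAt (fun x => log (1 - c * exp (-(l * x))))
      (c * l * exp (-(l * x)) / (1 - c * exp (-(l * x)))) x := fun x hx =>
    hasDerivAt_log_one_sub_mul_exp_neg (mul_exp_neg_mul_lt_one hc hl.le hx)
  have hnonneg : ∀ x ∈ Ioi (0 : ℝ), 0 ≤ c * l * exp (-(l * x)) / (1 - c * exp (-(l * x))) :=
    fun x hx => div_nonneg (by positivity)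
      (sub_nonneg.mpr (mul_exp_neg_mul_lt_one hc hl.le (le_of_lt hx)).le)
  rw [integral_Ioi_of_hasDerivAt_of_nonneg' hderiv hnonneg (tendsto_log_one_sub_mul_exp_neg hl)]
  simp

end

lemma integrableOn_gemo_exponential_survival {α l : ℝ} (hα0 : 0 < α) (hα1 : α ≤ 1) (hl : 0 < l) :
    IntegrableOn (fun x => α * exp (-(l * x)) / (1 - (1 - α) * exp (-(l * x)))) (Ioi 0) := by
  refine (exp_neg_integrableOn_Ioi 0 hl).mono' (Measurable.aestronglyMeasurable (by fun_prop))
    (ae_restrict_of_forall_mem measurableSet_Ioi fun x hx => ?_)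
  have he0 : 0 < exp (-(l * x)) := exp_pos _
  have hden : α ≤ 1 - (1 - α) * exp (-(l * x)) := by
    have he1 : exp (-(l * x)) ≤ 1 := exp_le_one_iff.mpr (by nlinarith [mem_Ioi.mp hx])
    nlinarith
  rw [norm_of_nonneg (div_nonneg (by positivity) (by linarith)), div_le_iff₀ (by linarith), neg_mul]
  nlinarith

theorem gemo_exponential_mean (α l : ℝ) (hα : α ∈ Set.Ioc (0:ℝ) 1) (hl : 0 < l) :
    IntegrableOn (fun x : ℝ => α * Real.exp (-(l * x)) / (1 - (1 - α) * Real.exp (-(l * x))))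
      (Set.Ioi (0:ℝ)) ∧
    (α ≠ 1 →
      ∫ x in Set.Ioi (0:ℝ), α * Real.exp (-(l * x)) / (1 - (1 - α) * Real.exp (-(l * x)))
        = -α * Real.log α / (l * (1 - α))) ∧
    (α = 1 →
      ∫ x in Set.Ioi (0:ℝ), α * Real.exp (-(l * x)) / (1 - (1 - α) * Real.exp (-(l * x)))
        = 1 / l) := by
  obtain ⟨hα0, hα1⟩ := hα
  refine ⟨integrableOn_gemo_exponential_survival hα0 hα1 hl, fun hne => ?_, fun heq => ?_⟩
  · have hc : 1 - α ≠ 0 := sub_ne_zero.mpr hne.symm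
    calc ∫ x in Ioi 0, α * exp (-(l * x)) / (1 - (1 - α) * exp (-(l * x)))
        = α / (l * (1 - α)) *
            ∫ x in Ioi 0, (1 - α) * l * exp (-(l * x)) / (1 - (1 - α) * exp (-(l * x))) := by
          rw [← integral_const_mul]
          congr 1 with x
          field_simp
      _ = -α * log α / (l * (1 - α)) := by
          rw [integral_Ioi_mul_exp_neg_div_one_sub (by linarith) (by linarith) hl, sub_sub_cancel]
          ring
  · subst heq
    simp only [sub_self, zero_mul, sub_zero, one_mul, div_one, ← neg_mul]
    rw [integral_exp_mul_Ioi (neg_neg_of_pos hl), mul_zero, exp_zero]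
    ring
end
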